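/- König–Xi characterization: let k be a noetherian integral domain and A an associative unital k-algebra, finitely generated and free as a k-module, equipped with a k-linear anti-involution τ. Then A admits a cell datum in the sense of Graham–Lehrer (with anti-involution τ) if and only if A admits a cellular decomposition in the sense of König–Xi (with anti-involution τ). -/

import Mathlib

open scoped TensorProduct

section cellular

variable {k : Type*} [CommRing k]

/-- A `k`-linear anti-involution of a `k`-algebra. -/
def IsAntiInvolution {A : Type*} [Ring A] [Algebra k A] (τ : A →ₗ[k] A) : Prop :=
  (∀ a b : A, τ (a * b) = τ b * τ a) ∧ ∀ a : A, τ (τ a) = a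

/-- A Graham–Lehrer cell datum `(I, M, C, τ)` for `A`:  a finite (strictly partially)
ordered set `I`, finite sets `M λ`, a `k`-basis `C^λ_{S,T}` of `A` indexed by
`Σ λ, M λ × M λ` satisfying (C2) and (C3). -/
def HasCellDatum (A : Type*) [Ring A] [Algebra k A] (τ : A →ₗ[k] A) : Prop :=
  ∃ (I : Type) (_ : Fintype I) (ltR : I → I → Prop) (_ : IsStrictOrder I ltR)
    (M : I → Type) (_ : ∀ l, Fintype (M l)) (C : Module.Basis ((l : I) × (M l × M l)) k A),
    -- (C2)
    (∀ (l : I) (S T : M l), τ (C ⟨l, (S, T)⟩) = C ⟨l, (T, S)⟩) ∧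
    -- (C3)
    ∃ rc : A → ∀ l : I, M l → M l → k,
      ∀ (a : A) (l : I) (S T : M l),
        a * C ⟨l, (S, T)⟩ - ∑ X : M l, rc a l X S • C ⟨l, (X, T)⟩ ∈
          Submodule.span k
            {x | ∃ (l' : I) (_ : ltR l l') (X Y : M l'), x = C ⟨l', (X, Y)⟩}

/-- König–Xi: `I₂/I₁` is a cell ideal of `A/I₁` (relative formulation inside `A`).
There is a left ideal `Δ` with `I₁ ≤ Δ ≤ I₂`, finitely generated free modulo `I₁`,
and an `A`-bimodule isomorphism `α : I₂/I₁ ≅ (Δ/I₁) ⊗ τ(Δ)/I₁` intertwining the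
anti-involution with `x ⊗ y ↦ τ(y) ⊗ τ(x)`. -/
def IsRelCellIdeal (A : Type*) [Ring A] [Algebra k A] (τ : A →ₗ[k] A)
    (I₁ I₂ : Submodule k A) : Prop :=
  I₁ ≤ I₂ ∧
  (∀ x ∈ I₂, τ x ∈ I₂) ∧
  ∃ Δ : Submodule k A, I₁ ≤ Δ ∧ Δ ≤ I₂ ∧
    -- `Δ/I₁` is a left ideal of `A/I₁`
    (∀ a : A, ∀ x ∈ Δ, a * x ∈ Δ) ∧
    -- `Δ/I₁` is finitely generated and free over `k`
    Module.Finite k (↥Δ ⧸ (I₁.comap Δ.subtype)) ∧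
    Module.Free k (↥Δ ⧸ (I₁.comap Δ.subtype)) ∧
    ∃ (Δτ : Submodule k A) (_ : Δτ = Submodule.map τ Δ ⊔ I₁)
      (α : (↥I₂ ⧸ (I₁.comap I₂.subtype)) ≃ₗ[k]
        ((↥Δ ⧸ (I₁.comap Δ.subtype)) ⊗[k] (↥Δτ ⧸ (I₁.comap Δτ.subtype)))),
      -- `α` is a homomorphism of left `A`-modules
      (∀ a : A,
        ∃ (LI : (↥I₂ ⧸ (I₁.comap I₂.subtype)) →ₗ[k] (↥I₂ ⧸ (I₁.comap I₂.subtype)))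
          (LΔ : (↥Δ ⧸ (I₁.comap Δ.subtype)) →ₗ[k] (↥Δ ⧸ (I₁.comap Δ.subtype))),
          (∀ (x : A) (hx : x ∈ I₂) (hax : a * x ∈ I₂),
            LI (Submodule.Quotient.mk ⟨x, hx⟩) = Submodule.Quotient.mk ⟨a * x, hax⟩) ∧
          (∀ (x : A) (hx : x ∈ Δ) (hax : a * x ∈ Δ),
            LΔ (Submodule.Quotient.mk ⟨x, hx⟩) = Submodule.Quotient.mk ⟨a * x, hax⟩) ∧
          α.toLinearMap ∘ₗ LI =
            (TensorProduct.map LΔ LinearMap.id) ∘ₗ α.toLinearMap) ∧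
      -- `α` is a homomorphism of right `A`-modules
      (∀ a : A,
        ∃ (RI : (↥I₂ ⧸ (I₁.comap I₂.subtype)) →ₗ[k] (↥I₂ ⧸ (I₁.comap I₂.subtype)))
          (RΔτ : (↥Δτ ⧸ (I₁.comap Δτ.subtype)) →ₗ[k] (↥Δτ ⧸ (I₁.comap Δτ.subtype))),
          (∀ (x : A) (hx : x ∈ I₂) (hxa : x * a ∈ I₂),
            RI (Submodule.Quotient.mk ⟨x, hx⟩) = Submodule.Quotient.mk ⟨x * a, hxa⟩) ∧
          (∀ (x : A) (hx : x ∈ Δτ) (hxa : x * a ∈ Δτ),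
            RΔτ (Submodule.Quotient.mk ⟨x, hx⟩) = Submodule.Quotient.mk ⟨x * a, hxa⟩) ∧
          α.toLinearMap ∘ₗ RI =
            (TensorProduct.map LinearMap.id RΔτ) ∘ₗ α.toLinearMap) ∧
      -- `α` intertwines `τ` with `x ⊗ y ↦ τ(y) ⊗ τ(x)`
      ∃ (tI : (↥I₂ ⧸ (I₁.comap I₂.subtype)) →ₗ[k] (↥I₂ ⧸ (I₁.comap I₂.subtype)))
        (tUV : (↥Δ ⧸ (I₁.comap Δ.subtype)) →ₗ[k] (↥Δτ ⧸ (I₁.comap Δτ.subtype)))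
        (tVU : (↥Δτ ⧸ (I₁.comap Δτ.subtype)) →ₗ[k] (↥Δ ⧸ (I₁.comap Δ.subtype))),
        (∀ (x : A) (hx : x ∈ I₂) (hτx : τ x ∈ I₂),
          tI (Submodule.Quotient.mk ⟨x, hx⟩) = Submodule.Quotient.mk ⟨τ x, hτx⟩) ∧
        (∀ (x : A) (hx : x ∈ Δ) (hτx : τ x ∈ Δτ),
          tUV (Submodule.Quotient.mk ⟨x, hx⟩) = Submodule.Quotient.mk ⟨τ x, hτx⟩) ∧
        (∀ (x : A) (hx : x ∈ Δτ) (hτx : τ x ∈ Δ),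
          tVU (Submodule.Quotient.mk ⟨x, hx⟩) = Submodule.Quotient.mk ⟨τ x, hτx⟩) ∧
        α.toLinearMap ∘ₗ tI =
          (TensorProduct.map tVU tUV) ∘ₗ
            (TensorProduct.comm k _ _).toLinearMap ∘ₗ α.toLinearMap

/-- The partial suprema `J_i = J'_1 ⊕ ... ⊕ J'_i` of a family of submodules. -/
def partialSup {M : Type*} [AddCommGroup M] [Module k M] {r : ℕ}
    (J' : Fin r → Submodule k M) (i : Fin (r + 1)) : Submodule k M :=
  ⨆ (j : Fin r) (_ : (j : ℕ) < (i : ℕ)), J' j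

/-- A König–Xi cellular decomposition `A = J'_1 ⊕ ... ⊕ J'_r` with associated cell
chain `0 = J_0 ⊂ J_1 ⊂ ... ⊂ J_r = A`. -/
def IsCellularDecomposition (A : Type*) [Ring A] [Algebra k A] (τ : A →ₗ[k] A)
    {r : ℕ} (J' : Fin r → Submodule k A) : Prop :=
  (∀ j, Submodule.map τ (J' j) = J' j) ∧
  iSupIndep J' ∧
  (⨆ j, J' j) = ⊤ ∧
  (∀ (i : Fin (r + 1)) (a : A), ∀ x ∈ partialSup J' i,
    a * x ∈ partialSup J' i ∧ x * a ∈ partialSup J' i) ∧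
  (∀ j : Fin r,
    IsRelCellIdeal A τ (partialSup J' j.castSucc) (partialSup J' j.succ))

end cellular


namespace CellAux

variable {k A : Type*} [CommRing k] [AddCommGroup A] [Module k A]

/-- `mk` into the relative quotient `N / (P ⊓ N)`. -/
noncomputable def mkq (P N : Submodule k A) (x : A) (hx : x ∈ N) :
    ↥N ⧸ (P.comap N.subtype) :=
  Submodule.Quotient.mk ⟨x, hx⟩

lemma mkq_eq_iff (P N : Submodule k A) {x y : A} (hx : x ∈ N) (hy : y ∈ N) :
    mkq P N x hx = mkq P N y hy ↔ x - y ∈ P := by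
  rw [mkq, mkq, Submodule.Quotient.eq]
  rfl

lemma mkq_eq_zero_iff (P N : Submodule k A) {x : A} (hx : x ∈ N) :
    mkq P N x hx = 0 ↔ x ∈ P := by
  rw [mkq, Submodule.Quotient.mk_eq_zero]
  rfl

lemma mkq_add (P N : Submodule k A) {x y : A} (hx : x ∈ N) (hy : y ∈ N) :
    mkq P N (x + y) (N.add_mem hx hy) = mkq P N x hx + mkq P N y hy := by
  rw [mkq, mkq, mkq, ← Submodule.Quotient.mk_add]
  rfl

lemma mkq_smul (P N : Submodule k A) {x : A} (c : k) (hx : x ∈ N) :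
    mkq P N (c • x) (N.smul_mem c hx) = c • mkq P N x hx := by
  rw [mkq, mkq, ← Submodule.Quotient.mk_smul]
  rfl

lemma mkq_sum (P N : Submodule k A) {ι : Type*} (s : Finset ι) (f : ι → A)
    (hf : ∀ i ∈ s, f i ∈ N) :
    mkq P N (∑ i ∈ s, f i) (Submodule.sum_mem N hf) =
      ∑ i ∈ s.attach, mkq P N (f i) (hf i i.2) := by
  have : (⟨∑ i ∈ s, f i, Submodule.sum_mem N hf⟩ : ↥N) =
      ∑ i ∈ s.attach, ⟨f i, hf i i.2⟩ := by
    apply Subtype.ext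
    push_cast
    rw [← Finset.sum_attach s f]
  rw [mkq, this]
  show Submodule.mkQ _ _ = _
  rw [map_sum]
  rfl

lemma mkq_surjective (P N : Submodule k A) (q : ↥N ⧸ (P.comap N.subtype)) :
    ∃ (x : A) (hx : x ∈ N), q = mkq P N x hx := by
  obtain ⟨⟨x, hx⟩, rfl⟩ := Submodule.Quotient.mk_surjective _ q
  exact ⟨x, hx, rfl⟩

/-- The map between relative quotients induced by `f : A →ₗ[k] A`. -/
noncomputable def indQ (P N P' N' : Submodule k A) (f : A →ₗ[k] A)
    (hN : ∀ x ∈ N, f x ∈ N') (hP : ∀ x ∈ P, x ∈ N → f x ∈ P') :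
    (↥N ⧸ (P.comap N.subtype)) →ₗ[k] (↥N' ⧸ (P'.comap N'.subtype)) :=
  Submodule.mapQ _ _ (f.restrict (fun x hx => hN x hx))
    (fun x hx => by
      simp only [Submodule.mem_comap] at hx ⊢
      exact hP _ hx x.2)

lemma indQ_mkq (P N P' N' : Submodule k A) (f : A →ₗ[k] A)
    (hN : ∀ x ∈ N, f x ∈ N') (hP : ∀ x ∈ P, x ∈ N → f x ∈ P')
    (x : A) (hx : x ∈ N) (hfx : f x ∈ N') :
    indQ P N P' N' f hN hP (mkq P N x hx) = mkq P' N' (f x) hfx := by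
  rw [indQ, mkq, Submodule.mapQ_apply]
  rfl

lemma span_image_disjoint {ι : Type*} (b : Module.Basis ι k A) {s t : Set ι}
    (h : Disjoint s t) :
    Disjoint (Submodule.span k (⇑b '' s)) (Submodule.span k (⇑b '' t)) := by
  rw [Submodule.disjoint_def]
  intro x hxs hxt
  rw [Module.Basis.mem_span_image] at hxs hxt
  have : ((b.repr x).support : Set ι) ⊆ s ∩ t := Set.subset_inter hxs hxt
  rw [Set.disjoint_iff_inter_eq_empty.mp h] at this
  have hsupp : (b.repr x).support = ∅ := by
    by_contra hne
    obtain ⟨i, hi⟩ := Finset.nonempty_iff_ne_empty.mpr hne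
    exact absurd (this hi) (by simp)
  have h0 : b.repr x = 0 := Finsupp.support_eq_empty.mp hsupp
  have := congrArg b.repr.symm h0
  simpa using this

end CellAux

namespace CellAux
variable {k A : Type*} [CommRing k] [AddCommGroup A] [Module k A]

section quotBasis

variable {ι : Type*} (b : Module.Basis ι k A) (s t : Set ι) (hst : Disjoint s t)

lemma mem_big (i : ι) (hi : i ∈ t) :
    b i ∈ Submodule.span k (⇑b '' (s ∪ t)) :=
  Submodule.subset_span ⟨i, Or.inr hi, rfl⟩

/-- The family inducing a basis of the relative quotient. -/
noncomputable def quotFam (i : t) :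
    ↥(Submodule.span k (⇑b '' (s ∪ t))) ⧸
      ((Submodule.span k (⇑b '' s)).comap (Submodule.span k (⇑b '' (s ∪ t))).subtype) :=
  mkq _ _ (b i) (mem_big b s t i i.2)

lemma quotFam_li (hst : Disjoint s t) : LinearIndependent k (quotFam b s t) := by
  set N := Submodule.span k (⇑b '' (s ∪ t)) with hN
  set P := Submodule.span k (⇑b '' s) with hP
  have hw : LinearIndependent k (fun i : t => (⟨b i, mem_big b s t i i.2⟩ : ↥N)) := by
    apply LinearIndependent.of_comp N.subtype
    have : (⇑N.subtype ∘ fun i : t => (⟨b i, mem_big b s t i i.2⟩ : ↥N)) =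
        (⇑b ∘ (Subtype.val : t → ι)) := rfl
    rw [this]
    exact b.linearIndependent.comp _ Subtype.val_injective
  have hdisj : Disjoint (Submodule.span k
      (Set.range fun i : t => (⟨b i, mem_big b s t i i.2⟩ : ↥N)))
      (LinearMap.ker (P.comap N.subtype).mkQ) := by
    rw [Submodule.ker_mkQ, Submodule.disjoint_def]
    intro x hx1 hx2
    have hx2' : (x : A) ∈ P := hx2
    have hx1' : (x : A) ∈ Submodule.span k (⇑b '' t) := by
      have : (x : A) ∈ Submodule.map N.subtype
          (Submodule.span k (Set.range fun i : t => (⟨b i, mem_big b s t i i.2⟩ : ↥N))) :=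
        ⟨x, hx1, rfl⟩
      rw [Submodule.map_span] at this
      have himg : (⇑N.subtype '' Set.range fun i : t =>
          (⟨b i, mem_big b s t i i.2⟩ : ↥N)) = ⇑b '' t := by
        ext y
        constructor
        · rintro ⟨z, ⟨i, rfl⟩, rfl⟩; exact ⟨i, i.2, rfl⟩
        · rintro ⟨i, hi, rfl⟩; exact ⟨⟨b i, mem_big b s t i hi⟩, ⟨⟨i, hi⟩, rfl⟩, rfl⟩
      rwa [himg] at this
    have : (x : A) = 0 := by
      have := span_image_disjoint b hst
      rw [Submodule.disjoint_def] at this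
      exact this _ hx2' hx1'
    exact Subtype.ext this
  have := hw.map hdisj
  exact this

lemma quotFam_span : ⊤ ≤ Submodule.span k (Set.range (quotFam b s t)) := by
  set N := Submodule.span k (⇑b '' (s ∪ t)) with hN
  set P := Submodule.span k (⇑b '' s) with hP
  have key : ∀ (x : A) (hx : x ∈ N), mkq P N x hx ∈ Submodule.span k (Set.range (quotFam b s t)) := by
    intro x hx
    induction hx using Submodule.span_induction with
    | mem y hy =>
      obtain ⟨i, hi, rfl⟩ := hy
      rcases hi with hi | hi
      · show mkq P N (b i) (Submodule.subset_span ⟨i, Or.inl hi, rfl⟩) ∈ _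
        have h0 : mkq P N (b i) (Submodule.subset_span ⟨i, Or.inl hi, rfl⟩) = 0 :=
          (mkq_eq_zero_iff P N _).mpr (Submodule.subset_span ⟨i, hi, rfl⟩)
        rw [h0]
        exact Submodule.zero_mem _
      · exact Submodule.subset_span ⟨⟨i, hi⟩, rfl⟩
    | zero =>
      show mkq P N 0 (Submodule.zero_mem N) ∈ _
      rw [(mkq_eq_zero_iff P N _).mpr (Submodule.zero_mem P)]
      exact Submodule.zero_mem _
    | add x y hx hy ihx ihy =>
      show mkq P N (x + y) (N.add_mem hx hy) ∈ _
      rw [mkq_add P N hx hy]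
      exact Submodule.add_mem _ ihx ihy
    | smul c x hx ihx =>
      show mkq P N (c • x) (N.smul_mem c hx) ∈ _
      rw [mkq_smul P N c hx]
      exact Submodule.smul_mem _ _ ihx
  intro q _
  obtain ⟨x, hx, rfl⟩ := mkq_surjective P N q
  exact key x hx

/-- Module.Basis of the relative quotient of spans of disjoint parts of a basis. -/
noncomputable def quotBasis :
    Module.Basis t k (↥(Submodule.span k (⇑b '' (s ∪ t))) ⧸
      ((Submodule.span k (⇑b '' s)).comap (Submodule.span k (⇑b '' (s ∪ t))).subtype)) :=
  Module.Basis.mk (quotFam_li b s t hst) (quotFam_span b s t)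

lemma quotBasis_apply (i : t) :
    quotBasis b s t hst i = mkq _ _ (b i) (mem_big b s t i i.2) :=
  Module.Basis.mk_apply _ _ _

end quotBasis
end CellAux

namespace CellAux

lemma tensor_subsingleton_left {k M N : Type*} [CommRing k] [AddCommGroup M] [Module k M]
    [AddCommGroup N] [Module k N] [Subsingleton M] : Subsingleton (M ⊗[k] N) := by
  have hz : ∀ z : M ⊗[k] N, z = 0 := by
    intro z
    induction z using TensorProduct.induction_on with
    | zero => rfl
    | tmul m n => rw [Subsingleton.elim m 0, TensorProduct.zero_tmul]
    | add a b ha hb => rw [ha, hb, add_zero]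
  exact ⟨fun x y => by rw [hz x, hz y]⟩

/-- The degenerate case `I₂ = I₁` of a relative cell ideal. -/
lemma isRelCellIdeal_self {k : Type*} [CommRing k] (A : Type*) [Ring A] [Algebra k A]
    (τ : A →ₗ[k] A) (I₁ : Submodule k A) (hτI : ∀ x ∈ I₁, τ x ∈ I₁)
    (hleft : ∀ a : A, ∀ x ∈ I₁, a * x ∈ I₁) :
    IsRelCellIdeal A τ I₁ I₁ := by
  have hsub : ∀ N : Submodule k A, N ≤ I₁ →
      Subsingleton (↥N ⧸ (I₁.comap N.subtype)) := fun N hN =>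
    Submodule.Quotient.subsingleton_iff.mpr (Submodule.comap_subtype_eq_top.mpr hN)
  refine ⟨le_rfl, hτI, I₁, le_rfl, le_rfl, hleft, ?_, ?_, ?_⟩
  · haveI := hsub I₁ le_rfl
    infer_instance
  · haveI := hsub I₁ le_rfl
    infer_instance
  · have hΔτle : Submodule.map τ I₁ ⊔ I₁ ≤ I₁ :=
      sup_le (Submodule.map_le_iff_le_comap.mpr (fun x hx => hτI x hx)) le_rfl
    haveI h1 := hsub I₁ le_rfl
    haveI h2 := hsub (Submodule.map τ I₁ ⊔ I₁) hΔτle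
    haveI h3 : Subsingleton
        ((↥I₁ ⧸ (I₁.comap I₁.subtype)) ⊗[k]
          (↥(Submodule.map τ I₁ ⊔ I₁) ⧸ (I₁.comap (Submodule.map τ I₁ ⊔ I₁).subtype))) :=
      tensor_subsingleton_left
    refine ⟨Submodule.map τ I₁ ⊔ I₁, rfl,
      LinearEquiv.ofLinear 0 0 (LinearMap.ext fun x => Subsingleton.elim _ _)
        (LinearMap.ext fun x => Subsingleton.elim _ _), ?_, ?_, ?_⟩
    · intro a
      exact ⟨0, 0, fun x hx hax => Subsingleton.elim _ _,
        fun x hx hax => Subsingleton.elim _ _, LinearMap.ext fun x => Subsingleton.elim _ _⟩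
    · intro a
      exact ⟨0, 0, fun x hx hax => Subsingleton.elim _ _,
        fun x hx hax => Subsingleton.elim _ _, LinearMap.ext fun x => Subsingleton.elim _ _⟩
    · exact ⟨0, 0, 0, fun x hx hax => Subsingleton.elim _ _,
        fun x hx hax => Subsingleton.elim _ _, fun x hx hax => Subsingleton.elim _ _,
        LinearMap.ext fun x => Subsingleton.elim _ _⟩

end CellAux

namespace CellAux

variable {k A : Type*} [CommRing k] [AddCommGroup A] [Module k A]

lemma mkq_finsum {ι : Type*} [Fintype ι] (P N : Submodule k A) (f : ι → A)
    (hf : ∀ i, f i ∈ N) :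
    mkq P N (∑ i, f i) (Submodule.sum_mem N (fun i _ => hf i)) =
      ∑ i, mkq P N (f i) (hf i) := by
  rw [mkq_sum P N Finset.univ f (fun i _ => hf i)]
  exact Finset.sum_attach Finset.univ (fun i => mkq P N (f i) (hf i))

lemma mkq_congr (P N : Submodule k A) {x y : A} (hx : x ∈ N) (hy : y ∈ N) (h : x = y) :
    mkq P N x hx = mkq P N y hy := by subst h; rfl

lemma exists_enum (I : Type) [Fintype I] (ltR : I → I → Prop) (hso : IsStrictOrder I ltR) :
    ∃ e : Fin (Fintype.card I) ≃ I, ∀ i j : Fin (Fintype.card I), ltR (e i) (e j) → j < i := by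
  classical
  let rle : I → I → Prop := fun a b => a = b ∨ ltR b a
  have hirr : ∀ a, ¬ ltR a a := fun a => hso.1.irrefl a
  have htr : ∀ a b c, ltR a b → ltR b c → ltR a c := fun a b c => hso.2.trans a b c
  haveI : IsPartialOrder I rle :=
    { refl := fun a => Or.inl rfl
      trans := by
        rintro a b c (rfl | hab) hbc
        · exact hbc
        · rcases hbc with rfl | hbc
          · exact Or.inr hab
          · exact Or.inr (htr _ _ _ hbc hab)
      antisymm := by
        rintro a b (rfl | h1) h2
        · rfl
        · rcases h2 with rfl | h2
          · rfl
          · exact absurd (htr _ _ _ h1 h2) (hirr b) }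
  obtain ⟨ls, hls, hrle⟩ := extend_partialOrder rle
  letI : LinearOrder I :=
    { le := ls
      le_refl := fun a => haveI := hls; refl_of ls a
      le_trans := fun a b c => haveI := hls; trans_of ls
      le_antisymm := fun a b h1 h2 => haveI := hls; antisymm_of ls h1 h2
      le_total := fun a b => haveI := hls; total_of ls a b
      toDecidableLE := Classical.decRel ls
      toDecidableEq := Classical.decEq I
      toDecidableLT := fun a b => Classical.dec _ }
  let e0 : Fin (Fintype.card I) ≃o I := monoEquivOfFin I rfl
  refine ⟨e0.toEquiv, fun i j hlt => ?_⟩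
  have hlt' : ltR (e0 i) (e0 j) := hlt
  have hne : e0 j ≠ e0 i := fun h => hirr _ (h ▸ hlt')
  have hle : ls (e0 j) (e0 i) := hrle _ _ (Or.inr hlt')
  have : (e0 j : I) < e0 i := lt_of_le_of_ne hle hne
  exact e0.lt_iff_lt.mp this

end CellAux

set_option maxHeartbeats 2000000 in
open CellAux in
lemma forward_direction {k : Type*} [CommRing k] (A : Type*) [Ring A] [Algebra k A]
    (τ : A →ₗ[k] A) (hτ : IsAntiInvolution τ) (h : HasCellDatum A τ) :
    ∃ (r : ℕ) (J' : Fin r → Submodule k A), IsCellularDecomposition A τ J' := by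
  classical
  obtain ⟨I, instI, ltR, hso, M, instM, C, hC2, rc, hC3⟩ := h
  letI := instI
  letI := instM
  obtain ⟨e, he⟩ := exists_enum I ltR hso
  let σ : ((l : I) × (M l × M l)) → ((l : I) × (M l × M l)) := fun p => ⟨p.1, (p.2.2, p.2.1)⟩
  have hσσ : ∀ p, σ (σ p) = p := by rintro ⟨l, S, T⟩; rfl
  have hτC : ∀ p, τ (C p) = C (σ p) := by rintro ⟨l, ⟨S, T⟩⟩; exact hC2 l S T
  have himgσ : ∀ X : Set ((l : I) × (M l × M l)), (∀ p ∈ X, σ p ∈ X) → σ '' X = X := by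
    intro X hX
    apply Set.Subset.antisymm
    · rintro _ ⟨p, hp, rfl⟩; exact hX p hp
    · intro p hp; exact ⟨σ p, hX p hp, hσσ p⟩
  have hmapτ : ∀ X : Set ((l : I) × (M l × M l)),
      Submodule.map τ (Submodule.span k (⇑C '' X)) = Submodule.span k (⇑C '' (σ '' X)) := by
    intro X
    rw [Submodule.map_span]
    congr 1
    rw [← Set.image_comp, ← Set.image_comp]
    exact Set.image_congr (fun p _ => hτC p)
  let pos : I → ℕ := fun l => ((e.symm l : Fin (Fintype.card I)) : ℕ)
  have hpos_lt : ∀ {l l' : I}, ltR l l' → pos l' < pos l := by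
    intro l l' hll
    have := he (e.symm l) (e.symm l')
      (by rwa [e.apply_symm_apply, e.apply_symm_apply])
    exact this
  let lv : I → Set ((l : I) × (M l × M l)) := fun l => {p | p.1 = l}
  let sset : ℕ → Set ((l : I) × (M l × M l)) := fun n => {p | pos p.1 < n}
  set J' : Fin (Fintype.card I) → Submodule k A :=
    fun j => Submodule.span k (⇑C '' lv (e j)) with hJ'
  have hposej : ∀ j : Fin (Fintype.card I), pos (e j) = (j : ℕ) := by
    intro j
    show ((e.symm (e j) : Fin (Fintype.card I)) : ℕ) = (j : ℕ)
    rw [e.symm_apply_apply]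
  have hσlv : ∀ l, ∀ p ∈ lv l, σ p ∈ lv l := fun l p hp => hp
  have hσsset : ∀ n, ∀ p ∈ sset n, σ p ∈ sset n := fun n p hp => hp
  have hτsset : ∀ (n : ℕ), ∀ x ∈ Submodule.span k (⇑C '' sset n),
      τ x ∈ Submodule.span k (⇑C '' sset n) := by
    intro n x hx
    have h1 : τ x ∈ Submodule.map τ (Submodule.span k (⇑C '' sset n)) := ⟨x, hx, rfl⟩
    rwa [hmapτ, himgσ _ (hσsset n)] at h1
  have hrem : ∀ (a : A) (l : I) (S T : M l),
      a * C ⟨l, (S, T)⟩ - ∑ X : M l, rc a l X S • C ⟨l, (X, T)⟩ ∈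
        Submodule.span k (⇑C '' {p | pos p.1 < pos l}) := by
    intro a l S T
    refine Submodule.span_le.mpr ?_ (hC3 a l S T)
    rintro x ⟨l', hl', X, Y, rfl⟩
    exact Submodule.subset_span ⟨⟨l', (X, Y)⟩, hpos_lt hl', rfl⟩
  have hmulL : ∀ (n : ℕ) (a : A), ∀ x ∈ Submodule.span k (⇑C '' sset n),
      a * x ∈ Submodule.span k (⇑C '' sset n) := by
    intro n a x hx
    have hle : Submodule.span k (⇑C '' sset n) ≤
        Submodule.comap (LinearMap.mulLeft k a) (Submodule.span k (⇑C '' sset n)) := by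
      apply Submodule.span_le.mpr
      rintro _ ⟨⟨l, S, T⟩, hp, rfl⟩
      show a * C ⟨l, (S, T)⟩ ∈ Submodule.span k (⇑C '' sset n)
      have h1 : ∑ X : M l, rc a l X S • C ⟨l, (X, T)⟩ ∈ Submodule.span k (⇑C '' sset n) :=
        Submodule.sum_mem _ (fun X _ => Submodule.smul_mem _ _
          (Submodule.subset_span ⟨⟨l, (X, T)⟩, hp, rfl⟩))
      have h2 : a * C ⟨l, (S, T)⟩ - ∑ X : M l, rc a l X S • C ⟨l, (X, T)⟩ ∈
          Submodule.span k (⇑C '' sset n) := by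
        refine Submodule.span_mono ?_ (hrem a l S T)
        exact Set.image_mono (fun p hp' => show pos p.1 < n from lt_trans hp' hp)
      have h3 := Submodule.add_mem _ h2 h1
      rwa [sub_add_cancel] at h3
    exact hle hx
  have hmul_eq : ∀ x a : A, x * a = τ (τ a * τ x) := by
    intro x a; rw [hτ.1, hτ.2, hτ.2]
  have hmulR : ∀ (n : ℕ) (a : A), ∀ x ∈ Submodule.span k (⇑C '' sset n),
      x * a ∈ Submodule.span k (⇑C '' sset n) := by
    intro n a x hx
    rw [hmul_eq]
    exact hτsset n _ (hmulL n _ _ (hτsset n x hx))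
  have hPS : ∀ i : Fin (Fintype.card I + 1),
      partialSup J' i = Submodule.span k (⇑C '' sset (i : ℕ)) := by
    intro i
    apply le_antisymm
    · apply iSup_le; intro j; apply iSup_le; intro hj
      apply Submodule.span_mono
      apply Set.image_mono
      intro p hp
      show pos p.1 < (i : ℕ)
      rw [show p.1 = e j from hp, hposej]
      exact hj
    · apply Submodule.span_le.mpr
      rintro _ ⟨p, hp, rfl⟩
      have h1 : C p ∈ J' (e.symm p.1) :=
        Submodule.subset_span ⟨p, (e.apply_symm_apply p.1).symm, rfl⟩
      exact Submodule.mem_iSup_of_mem (e.symm p.1) (Submodule.mem_iSup_of_mem hp h1)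
  refine ⟨Fintype.card I, J', ?_, ?_, ?_, ?_, ?_⟩
  · -- τ-stability
    intro j
    show Submodule.map τ (Submodule.span k (⇑C '' lv (e j))) = _
    rw [hmapτ, himgσ _ (hσlv (e j))]
  · -- independence
    rw [iSupIndep_def]
    intro j
    have hd : Disjoint (lv (e j)) {p : (l : I) × (M l × M l) | p.1 ≠ e j} :=
      Set.disjoint_left.mpr (fun p hp hp2 => hp2 hp)
    refine Disjoint.mono_right ?_ (span_image_disjoint C hd)
    apply iSup_le; intro i; apply iSup_le; intro hij
    apply Submodule.span_mono
    apply Set.image_mono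
    intro p hp
    show p.1 ≠ e j
    rw [show p.1 = e i from hp]
    exact fun hcontra => hij (e.injective hcontra)
  · -- sup eq top
    apply eq_top_iff.mpr
    rw [← C.span_eq]
    apply Submodule.span_le.mpr
    rintro _ ⟨p, rfl⟩
    exact Submodule.mem_iSup_of_mem (e.symm p.1)
      (Submodule.subset_span ⟨p, (e.apply_symm_apply p.1).symm, rfl⟩)
  · -- ideal property
    intro i a x hx
    rw [hPS i] at hx ⊢
    exact ⟨hmulL _ a x hx, hmulR _ a x hx⟩
  · -- cell ideals
    intro j
    rw [hPS j.castSucc, hPS j.succ]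
    show IsRelCellIdeal A τ (Submodule.span k (⇑C '' sset (j : ℕ)))
      (Submodule.span k (⇑C '' sset ((j : ℕ) + 1)))
    by_cases hM : Nonempty (M (e j))
    · -- main case
      obtain ⟨T₀⟩ := hM
      let l₀ := e j
      have hl₀ : l₀ = e j := rfl
      let s : Set ((l : I) × (M l × M l)) := sset (j : ℕ)
      have hs : s = sset (j : ℕ) := rfl
      let fI : M l₀ × M l₀ → ((l : I) × (M l × M l)) := fun p => ⟨l₀, p⟩
      let fΔ : M l₀ → ((l : I) × (M l × M l)) := fun S => ⟨l₀, (S, T₀)⟩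
      let fΔτ : M l₀ → ((l : I) × (M l × M l)) := fun T => ⟨l₀, (T₀, T)⟩
      have hinjI : Function.Injective fI := by
        intro p q h
        have h' : (⟨l₀, p⟩ : (l : I) × (M l × M l)) = ⟨l₀, q⟩ := h
        exact eq_of_heq (Sigma.mk.inj_iff.mp h').2
      have hinjΔ : Function.Injective fΔ := by
        intro S S' h
        have h' : (⟨l₀, (S, T₀)⟩ : (l : I) × (M l × M l)) = ⟨l₀, (S', T₀)⟩ := h
        have h2 := eq_of_heq (Sigma.mk.inj_iff.mp h').2
        exact ((Prod.mk.injEq _ _ _ _).mp h2).1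
      have hinjΔτ : Function.Injective fΔτ := by
        intro S S' h
        have h' : (⟨l₀, (T₀, S)⟩ : (l : I) × (M l × M l)) = ⟨l₀, (T₀, S')⟩ := h
        have h2 := eq_of_heq (Sigma.mk.inj_iff.mp h').2
        exact ((Prod.mk.injEq _ _ _ _).mp h2).2
      have hposl₀ : pos l₀ = (j : ℕ) := hposej j
      have hdisjI : Disjoint s (Set.range fI) := by
        rw [Set.disjoint_left]
        rintro p hp ⟨q, rfl⟩
        have h0 : pos l₀ < (j : ℕ) := hp
        rw [hposl₀] at h0
        exact lt_irrefl _ h0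
      have hranΔI : Set.range fΔ ⊆ Set.range fI := by
        rintro _ ⟨S, rfl⟩; exact ⟨(S, T₀), rfl⟩
      have hranΔτI : Set.range fΔτ ⊆ Set.range fI := by
        rintro _ ⟨T, rfl⟩; exact ⟨(T₀, T), rfl⟩
      have hdisjΔ : Disjoint s (Set.range fΔ) := hdisjI.mono_right hranΔI
      have hdisjΔτ : Disjoint s (Set.range fΔτ) := hdisjI.mono_right hranΔτI
      have hsset_succ : sset ((j : ℕ) + 1) = s ∪ Set.range fI := by
        ext p
        constructor
        · intro hp
          rcases Nat.lt_succ_iff_lt_or_eq.mp hp with h1 | h1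
          · exact Or.inl h1
          · right
            have h2 : e.symm p.1 = j := Fin.ext h1
            have hp1 : p.1 = l₀ := by rw [hl₀, ← h2, e.apply_symm_apply]
            obtain ⟨l, q⟩ := p
            subst hp1
            exact ⟨q, rfl⟩
        · rintro (hp | ⟨q, rfl⟩)
          · exact Nat.lt_succ_of_lt hp
          · show pos l₀ < (j : ℕ) + 1
            rw [hposl₀]; exact Nat.lt_succ_self _
      rw [hsset_succ]
      let I₁ := Submodule.span k (⇑C '' s)
      have hI₁ : I₁ = Submodule.span k (⇑C '' s) := rfl
      let I₂ := Submodule.span k (⇑C '' (s ∪ Set.range fI))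
      have hI₂ : I₂ = Submodule.span k (⇑C '' (s ∪ Set.range fI)) := rfl
      let Δ := Submodule.span k (⇑C '' (s ∪ Set.range fΔ))
      have hΔdef : Δ = Submodule.span k (⇑C '' (s ∪ Set.range fΔ)) := rfl
      let Δτ := Submodule.span k (⇑C '' (s ∪ Set.range fΔτ))
      have hΔτdef : Δτ = Submodule.span k (⇑C '' (s ∪ Set.range fΔτ)) := rfl
      have hI₁Δ : I₁ ≤ Δ := Submodule.span_mono (Set.image_mono Set.subset_union_left)
      have hI₁Δτ : I₁ ≤ Δτ := Submodule.span_mono (Set.image_mono Set.subset_union_left)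
      have hI₁I₂ : I₁ ≤ I₂ := Submodule.span_mono (Set.image_mono Set.subset_union_left)
      have hΔI₂ : Δ ≤ I₂ :=
        Submodule.span_mono (Set.image_mono (Set.union_subset_union_right _ hranΔI))
      have hΔτI₂ : Δτ ≤ I₂ :=
        Submodule.span_mono (Set.image_mono (Set.union_subset_union_right _ hranΔτI))
      -- σ images
      have hσs : σ '' s = s := himgσ _ (hσsset (j : ℕ))
      have hσΔ : σ '' (s ∪ Set.range fΔ) = s ∪ Set.range fΔτ := by
        rw [Set.image_union, hσs, ← Set.range_comp]
        have h0 : σ ∘ fΔ = fΔτ := funext fun S => rfl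
        rw [h0]
      have hσΔτ : σ '' (s ∪ Set.range fΔτ) = s ∪ Set.range fΔ := by
        rw [Set.image_union, hσs, ← Set.range_comp]
        have h0 : σ ∘ fΔτ = fΔ := funext fun S => rfl
        rw [h0]
      have hσI : σ '' (s ∪ Set.range fI) = s ∪ Set.range fI := by
        apply himgσ
        rintro p (hp | ⟨q, rfl⟩)
        · exact Or.inl (hσsset _ p hp)
        · exact Or.inr ⟨(q.2, q.1), rfl⟩
      have hmapτΔ : Submodule.map τ Δ = Δτ := by rw [hΔdef, hmapτ, hσΔ, hΔτdef]
      have hmapτΔτ : Submodule.map τ Δτ = Δ := by rw [hΔτdef, hmapτ, hσΔτ, hΔdef]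
      have hmapτI₂ : Submodule.map τ I₂ = I₂ := by rw [hI₂, hmapτ, hσI]
      have hmapτI₁ : Submodule.map τ I₁ = I₁ := by rw [hI₁, hs, hmapτ, hσs]
      have hτI₂ : ∀ x ∈ I₂, τ x ∈ I₂ := fun x hx => hmapτI₂ ▸ Submodule.mem_map_of_mem hx
      have hτI₁ : ∀ x ∈ I₁, τ x ∈ I₁ := fun x hx => hmapτI₁ ▸ Submodule.mem_map_of_mem hx
      have hτΔ : ∀ x ∈ Δ, τ x ∈ Δτ := fun x hx => hmapτΔ ▸ Submodule.mem_map_of_mem hx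
      have hτΔτ : ∀ x ∈ Δτ, τ x ∈ Δ := fun x hx => hmapτΔτ ▸ Submodule.mem_map_of_mem hx
      -- generators
      have hgenI₂ : ∀ p : M l₀ × M l₀, C ⟨l₀, p⟩ ∈ I₂ :=
        fun p => Submodule.subset_span ⟨fI p, Or.inr ⟨p, rfl⟩, rfl⟩
      have hgenΔ : ∀ S : M l₀, C ⟨l₀, (S, T₀)⟩ ∈ Δ :=
        fun S => Submodule.subset_span ⟨fΔ S, Or.inr ⟨S, rfl⟩, rfl⟩
      have hgenΔτ : ∀ T : M l₀, C ⟨l₀, (T₀, T)⟩ ∈ Δτ :=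
        fun T => Submodule.subset_span ⟨fΔτ T, Or.inr ⟨T, rfl⟩, rfl⟩
      -- key C3 facts relative to I₁
      have hseteq : {p : (l : I) × (M l × M l) | pos p.1 < pos l₀} = s := by
        rw [hposl₀]
      have hkeyI₁ : ∀ (a : A) (S T : M l₀),
          a * C ⟨l₀, (S, T)⟩ - ∑ X : M l₀, rc a l₀ X S • C ⟨l₀, (X, T)⟩ ∈ I₁ := by
        intro a S T
        have h0 := hrem a l₀ S T
        rwa [hseteq] at h0
      have hkeyR : ∀ (a : A) (S T : M l₀),
          C ⟨l₀, (S, T)⟩ * a - ∑ X : M l₀, rc (τ a) l₀ X T • C ⟨l₀, (S, X)⟩ ∈ I₁ := by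
        intro a S T
        have h1 := hτI₁ _ (hkeyI₁ (τ a) T S)
        have h2 : τ (τ a * C ⟨l₀, (T, S)⟩ - ∑ X : M l₀, rc (τ a) l₀ X T • C ⟨l₀, (X, S)⟩)
            = C ⟨l₀, (S, T)⟩ * a - ∑ X : M l₀, rc (τ a) l₀ X T • C ⟨l₀, (S, X)⟩ := by
          rw [map_sub, map_sum]
          congr 1
          · rw [hτ.1]
            rw [show τ (C ⟨l₀, (T, S)⟩) = C ⟨l₀, (S, T)⟩ from hτC ⟨l₀, (T, S)⟩]
            rw [hτ.2]
          · refine Finset.sum_congr rfl fun X _ => ?_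
            rw [map_smul]
            rw [show τ (C ⟨l₀, (X, S)⟩) = C ⟨l₀, (S, X)⟩ from hτC ⟨l₀, (X, S)⟩]
        rwa [h2] at h1
      -- multiplication closure
      have hmulI₁L : ∀ (a : A), ∀ x ∈ I₁, a * x ∈ I₁ := fun a x hx => hmulL _ a x hx
      have hmulI₁R : ∀ (a : A), ∀ x ∈ I₁, x * a ∈ I₁ := fun a x hx => hmulR _ a x hx
      have hI₂eq : I₂ = Submodule.span k (⇑C '' sset ((j : ℕ) + 1)) := by rw [hI₂, hsset_succ]
      have hmulI₂L : ∀ (a : A), ∀ x ∈ I₂, a * x ∈ I₂ := by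
        intro a x hx; rw [hI₂eq] at hx ⊢; exact hmulL _ a x hx
      have hmulI₂R : ∀ (a : A), ∀ x ∈ I₂, x * a ∈ I₂ := by
        intro a x hx; rw [hI₂eq] at hx ⊢; exact hmulR _ a x hx
      have hmulΔL : ∀ (a : A), ∀ x ∈ Δ, a * x ∈ Δ := by
        intro a x hx
        have hle : Δ ≤ Submodule.comap (LinearMap.mulLeft k a) Δ := by
          apply Submodule.span_le.mpr
          rintro _ ⟨p, hp, rfl⟩
          show a * C p ∈ Δ
          rcases hp with hp | ⟨S, rfl⟩
          · exact hI₁Δ (hmulI₁L a _ (Submodule.subset_span ⟨p, hp, rfl⟩))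
          · have h1 : ∑ X : M l₀, rc a l₀ X S • C ⟨l₀, (X, T₀)⟩ ∈ Δ :=
              Submodule.sum_mem _ (fun X _ => Submodule.smul_mem _ _ (hgenΔ X))
            have h3 := Submodule.add_mem _ (hI₁Δ (hkeyI₁ a S T₀)) h1
            rwa [sub_add_cancel] at h3
        exact hle hx
      have hmulΔτR : ∀ (a : A), ∀ x ∈ Δτ, x * a ∈ Δτ := by
        intro a x hx
        have hle : Δτ ≤ Submodule.comap (LinearMap.mulRight k a) Δτ := by
          apply Submodule.span_le.mpr
          rintro _ ⟨p, hp, rfl⟩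
          show C p * a ∈ Δτ
          rcases hp with hp | ⟨T, rfl⟩
          · exact hI₁Δτ (hmulI₁R a _ (Submodule.subset_span ⟨p, hp, rfl⟩))
          · have h1 : ∑ X : M l₀, rc (τ a) l₀ X T • C ⟨l₀, (T₀, X)⟩ ∈ Δτ :=
              Submodule.sum_mem _ (fun X _ => Submodule.smul_mem _ _ (hgenΔτ X))
            have h3 := Submodule.add_mem _ (hI₁Δτ (hkeyR a T₀ T)) h1
            rwa [sub_add_cancel] at h3
        exact hle hx
      -- bases of the quotients
      set bI : Module.Basis (M l₀ × M l₀) k (↥I₂ ⧸ (I₁.comap I₂.subtype)) :=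
        (quotBasis C s (Set.range fI) hdisjI).reindex (Equiv.ofInjective fI hinjI).symm with hbIdef
      set bΔ : Module.Basis (M l₀) k (↥Δ ⧸ (I₁.comap Δ.subtype)) :=
        (quotBasis C s (Set.range fΔ) hdisjΔ).reindex (Equiv.ofInjective fΔ hinjΔ).symm with hbΔdef
      set bΔτ : Module.Basis (M l₀) k (↥Δτ ⧸ (I₁.comap Δτ.subtype)) :=
        (quotBasis C s (Set.range fΔτ) hdisjΔτ).reindex (Equiv.ofInjective fΔτ hinjΔτ).symm with hbΔτdef
      have hbI : ∀ p : M l₀ × M l₀, bI p = mkq I₁ I₂ (C (fI p)) (hgenI₂ p) := by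
        intro p
        rw [hbIdef, Module.Basis.reindex_apply, Equiv.symm_symm, quotBasis_apply]
        exact mkq_congr _ _ _ _ rfl
      have hbΔ : ∀ S : M l₀, bΔ S = mkq I₁ Δ (C (fΔ S)) (hgenΔ S) := by
        intro S
        rw [hbΔdef, Module.Basis.reindex_apply, Equiv.symm_symm, quotBasis_apply]
        exact mkq_congr _ _ _ _ rfl
      have hbΔτ : ∀ T : M l₀, bΔτ T = mkq I₁ Δτ (C (fΔτ T)) (hgenΔτ T) := by
        intro T
        rw [hbΔτdef, Module.Basis.reindex_apply, Equiv.symm_symm, quotBasis_apply]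
        exact mkq_congr _ _ _ _ rfl
      -- the structural iso
      set α := bI.equiv (bΔ.tensorProduct bΔτ) (Equiv.refl _) with hαdef
      have hα : ∀ (S T : M l₀), α (bI (S, T)) = bΔ S ⊗ₜ[k] bΔτ T := by
        intro S T
        rw [hαdef, Module.Basis.equiv_apply, Equiv.refl_apply]
        exact Module.Basis.tensorProduct_apply _ _ _ _
      -- generic mkq computation
      have hmk : ∀ (N : Submodule k A) (y : A) (f : M l₀ → A) (hy : y ∈ N)
          (hf : ∀ X, f X ∈ N) (c : M l₀ → k),
          (y - ∑ X : M l₀, c X • f X ∈ I₁) →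
          mkq I₁ N y hy = ∑ X : M l₀, c X • mkq I₁ N (f X) (hf X) := by
        intro N y f hy hf c hkey
        have hsm : ∀ X : M l₀, c X • f X ∈ N := fun X => Submodule.smul_mem _ _ (hf X)
        have hsum_mem : ∑ X : M l₀, c X • f X ∈ N :=
          Submodule.sum_mem _ fun X _ => hsm X
        have h1 : mkq I₁ N y hy = mkq I₁ N (∑ X : M l₀, c X • f X) hsum_mem :=
          (mkq_eq_iff I₁ N hy hsum_mem).mpr hkey
        have h2 : mkq I₁ N (∑ X : M l₀, c X • f X) hsum_mem
            = ∑ X : M l₀, mkq I₁ N (c X • f X) (hsm X) :=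
          mkq_finsum I₁ N (fun X => c X • f X) hsm
        have h3 : ∀ X : M l₀, mkq I₁ N (c X • f X) (hsm X) = c X • mkq I₁ N (f X) (hf X) :=
          fun X => mkq_smul I₁ N (c X) (hf X)
        rw [h1, h2]
        exact Finset.sum_congr rfl fun X _ => h3 X
      -- assemble
      refine ⟨hI₁I₂, hτI₂, Δ, hI₁Δ, hΔI₂, hmulΔL,
        Module.Finite.of_basis bΔ, Module.Free.of_basis bΔ, Δτ, ?_, α, ?_, ?_, ?_⟩
      · rw [hmapτΔ]
        exact (sup_eq_left.mpr hI₁Δτ).symm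
      · -- left module homomorphism
        intro a
        set LI := indQ I₁ I₂ I₁ I₂ (LinearMap.mulLeft k a)
          (fun x hx => hmulI₂L a x hx) (fun x hx _ => hmulI₁L a x hx) with hLIdef
        set LΔ := indQ I₁ Δ I₁ Δ (LinearMap.mulLeft k a)
          (fun x hx => hmulΔL a x hx) (fun x hx _ => hmulI₁L a x hx) with hLΔdef
        have eLI : ∀ (x : A) (hx : x ∈ I₂) (hax : a * x ∈ I₂),
            LI (mkq I₁ I₂ x hx) = mkq I₁ I₂ (a * x) hax := by
          intro x hx hax
          rw [hLIdef]
          exact indQ_mkq I₁ I₂ I₁ I₂ _ _ _ x hx hax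
        have eLΔ : ∀ (x : A) (hx : x ∈ Δ) (hax : a * x ∈ Δ),
            LΔ (mkq I₁ Δ x hx) = mkq I₁ Δ (a * x) hax := by
          intro x hx hax
          rw [hLΔdef]
          exact indQ_mkq I₁ Δ I₁ Δ _ _ _ x hx hax
        refine ⟨LI, LΔ, fun x hx hax => eLI x hx hax, fun x hx hax => eLΔ x hx hax, ?_⟩
        apply Module.Basis.ext bI
        rintro ⟨S, T⟩
        have hax : a * C ⟨l₀, (S, T)⟩ ∈ I₂ := hmulI₂L a _ (hgenI₂ (S, T))
        have e1 : LI (bI (S, T)) = mkq I₁ I₂ (a * C ⟨l₀, (S, T)⟩) hax := by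
          rw [hbI (S, T)]
          exact eLI _ (hgenI₂ (S, T)) hax
        have e2 : mkq I₁ I₂ (a * C ⟨l₀, (S, T)⟩) hax
            = ∑ X : M l₀, rc a l₀ X S • mkq I₁ I₂ (C ⟨l₀, (X, T)⟩) (hgenI₂ (X, T)) :=
          hmk I₂ _ (fun X => C ⟨l₀, (X, T)⟩) hax (fun X => hgenI₂ (X, T))
            (fun X => rc a l₀ X S) (hkeyI₁ a S T)
        have e3 : LΔ (bΔ S) = ∑ X : M l₀, rc a l₀ X S • bΔ X := by
          have hax' : a * C ⟨l₀, (S, T₀)⟩ ∈ Δ := hmulΔL a _ (hgenΔ S)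
          rw [hbΔ S]
          rw [eLΔ _ (hgenΔ S) hax']
          rw [hmk Δ _ (fun X => C ⟨l₀, (X, T₀)⟩) hax' (fun X => hgenΔ X)
            (fun X => rc a l₀ X S) (hkeyI₁ a S T₀)]
          exact Finset.sum_congr rfl fun X _ => by rw [hbΔ X]
        simp only [LinearMap.coe_comp, Function.comp_apply, LinearEquiv.coe_coe]
        rw [e1, e2, map_sum]
        rw [hα S T, TensorProduct.map_tmul, LinearMap.id_apply, e3]
        rw [TensorProduct.sum_tmul]
        refine Finset.sum_congr rfl fun X _ => ?_
        rw [map_smul]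
        rw [show mkq I₁ I₂ (C ⟨l₀, (X, T)⟩) (hgenI₂ (X, T)) = bI (X, T) from (hbI (X, T)).symm]
        rw [hα X T, TensorProduct.smul_tmul']
      · -- right module homomorphism
        intro a
        set RI := indQ I₁ I₂ I₁ I₂ (LinearMap.mulRight k a)
          (fun x hx => hmulI₂R a x hx) (fun x hx _ => hmulI₁R a x hx) with hRIdef
        set RΔτ := indQ I₁ Δτ I₁ Δτ (LinearMap.mulRight k a)
          (fun x hx => hmulΔτR a x hx) (fun x hx _ => hmulI₁R a x hx) with hRΔτdef
        have eRI : ∀ (x : A) (hx : x ∈ I₂) (hxa : x * a ∈ I₂),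
            RI (mkq I₁ I₂ x hx) = mkq I₁ I₂ (x * a) hxa := by
          intro x hx hxa
          rw [hRIdef]
          exact indQ_mkq I₁ I₂ I₁ I₂ _ _ _ x hx hxa
        have eRΔτ : ∀ (x : A) (hx : x ∈ Δτ) (hxa : x * a ∈ Δτ),
            RΔτ (mkq I₁ Δτ x hx) = mkq I₁ Δτ (x * a) hxa := by
          intro x hx hxa
          rw [hRΔτdef]
          exact indQ_mkq I₁ Δτ I₁ Δτ _ _ _ x hx hxa
        refine ⟨RI, RΔτ, fun x hx hxa => eRI x hx hxa, fun x hx hxa => eRΔτ x hx hxa, ?_⟩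
        apply Module.Basis.ext bI
        rintro ⟨S, T⟩
        have hxa : C ⟨l₀, (S, T)⟩ * a ∈ I₂ := hmulI₂R a _ (hgenI₂ (S, T))
        have e1 : RI (bI (S, T)) = mkq I₁ I₂ (C ⟨l₀, (S, T)⟩ * a) hxa := by
          rw [hbI (S, T)]
          exact eRI _ (hgenI₂ (S, T)) hxa
        have e2 : mkq I₁ I₂ (C ⟨l₀, (S, T)⟩ * a) hxa
            = ∑ X : M l₀, rc (τ a) l₀ X T • mkq I₁ I₂ (C ⟨l₀, (S, X)⟩) (hgenI₂ (S, X)) :=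
          hmk I₂ _ (fun X => C ⟨l₀, (S, X)⟩) hxa (fun X => hgenI₂ (S, X))
            (fun X => rc (τ a) l₀ X T) (hkeyR a S T)
        have e3 : RΔτ (bΔτ T) = ∑ X : M l₀, rc (τ a) l₀ X T • bΔτ X := by
          have hxa' : C ⟨l₀, (T₀, T)⟩ * a ∈ Δτ := hmulΔτR a _ (hgenΔτ T)
          rw [hbΔτ T]
          rw [eRΔτ _ (hgenΔτ T) hxa']
          rw [hmk Δτ _ (fun X => C ⟨l₀, (T₀, X)⟩) hxa' (fun X => hgenΔτ X)
            (fun X => rc (τ a) l₀ X T) (hkeyR a T₀ T)]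
          exact Finset.sum_congr rfl fun X _ => by rw [hbΔτ X]
        simp only [LinearMap.coe_comp, Function.comp_apply, LinearEquiv.coe_coe]
        rw [e1, e2, map_sum]
        rw [hα S T, TensorProduct.map_tmul, LinearMap.id_apply, e3]
        rw [TensorProduct.tmul_sum]
        refine Finset.sum_congr rfl fun X _ => ?_
        rw [map_smul]
        rw [show mkq I₁ I₂ (C ⟨l₀, (S, X)⟩) (hgenI₂ (S, X)) = bI (S, X) from (hbI (S, X)).symm]
        rw [hα S X, TensorProduct.tmul_smul]
      · -- anti-involution intertwining
        set tI := indQ I₁ I₂ I₁ I₂ τ hτI₂ (fun x hx _ => hτI₁ x hx) with htIdef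
        set tUV := indQ I₁ Δ I₁ Δτ τ hτΔ (fun x hx _ => hτI₁ x hx) with htUVdef
        set tVU := indQ I₁ Δτ I₁ Δ τ hτΔτ (fun x hx _ => hτI₁ x hx) with htVUdef
        have etI : ∀ (x : A) (hx : x ∈ I₂) (hτx : τ x ∈ I₂),
            tI (mkq I₁ I₂ x hx) = mkq I₁ I₂ (τ x) hτx := by
          intro x hx hτx
          rw [htIdef]
          exact indQ_mkq I₁ I₂ I₁ I₂ _ _ _ x hx hτx
        have etUV : ∀ (x : A) (hx : x ∈ Δ) (hτx : τ x ∈ Δτ),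
            tUV (mkq I₁ Δ x hx) = mkq I₁ Δτ (τ x) hτx := by
          intro x hx hτx
          rw [htUVdef]
          exact indQ_mkq I₁ Δ I₁ Δτ _ _ _ x hx hτx
        have etVU : ∀ (x : A) (hx : x ∈ Δτ) (hτx : τ x ∈ Δ),
            tVU (mkq I₁ Δτ x hx) = mkq I₁ Δ (τ x) hτx := by
          intro x hx hτx
          rw [htVUdef]
          exact indQ_mkq I₁ Δτ I₁ Δ _ _ _ x hx hτx
        refine ⟨tI, tUV, tVU, fun x hx hτx => etI x hx hτx, fun x hx hτx => etUV x hx hτx,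
          fun x hx hτx => etVU x hx hτx, ?_⟩
        apply Module.Basis.ext bI
        rintro ⟨S, T⟩
        have e1 : tI (bI (S, T)) = mkq I₁ I₂ (C ⟨l₀, (T, S)⟩) (hgenI₂ (T, S)) := by
          rw [hbI (S, T)]
          rw [etI _ (hgenI₂ (S, T)) (hτI₂ _ (hgenI₂ (S, T)))]
          exact mkq_congr _ _ _ _ (hτC ⟨l₀, (S, T)⟩)
        have e2 : tVU (bΔτ T) = bΔ T := by
          rw [hbΔτ T]
          rw [etVU _ (hgenΔτ T) (hτΔτ _ (hgenΔτ T))]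
          rw [show mkq I₁ Δ (τ (C (fΔτ T))) (hτΔτ _ (hgenΔτ T))
            = mkq I₁ Δ (C ⟨l₀, (T, T₀)⟩) (hgenΔ T) from
            mkq_congr _ _ _ _ (hτC ⟨l₀, (T₀, T)⟩)]
          exact (hbΔ T).symm
        have e3 : tUV (bΔ S) = bΔτ S := by
          rw [hbΔ S]
          rw [etUV _ (hgenΔ S) (hτΔ _ (hgenΔ S))]
          rw [show mkq I₁ Δτ (τ (C (fΔ S))) (hτΔ _ (hgenΔ S))
            = mkq I₁ Δτ (C ⟨l₀, (T₀, S)⟩) (hgenΔτ S) from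
            mkq_congr _ _ _ _ (hτC ⟨l₀, (S, T₀)⟩)]
          exact (hbΔτ S).symm
        simp only [LinearMap.coe_comp, Function.comp_apply, LinearEquiv.coe_coe]
        rw [e1]
        rw [show mkq I₁ I₂ (C ⟨l₀, (T, S)⟩) (hgenI₂ (T, S)) = bI (T, S) from (hbI (T, S)).symm]
        rw [hα T S, hα S T, TensorProduct.comm_tmul, TensorProduct.map_tmul, e2, e3]
    · -- degenerate case
      have hss : sset ((j : ℕ) + 1) = sset (j : ℕ) := by
        ext p
        constructor
        · intro hp
          rcases Nat.lt_succ_iff_lt_or_eq.mp hp with h1 | h1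
          · exact h1
          · exfalso
            have : e.symm p.1 = j := Fin.ext h1
            have hp1 : p.1 = e j := by rw [← this, e.apply_symm_apply]
            exact hM ⟨hp1 ▸ p.2.1⟩
        · intro hp; exact Nat.lt_succ_of_lt hp
      rw [hss]
      exact isRelCellIdeal_self A τ _ (hτsset (j : ℕ)) (fun a x hx => hmulL _ a x hx)

set_option maxHeartbeats 2000000 in
open CellAux in
lemma reverse_direction {k : Type*} [CommRing k] (A : Type*) [Ring A] [Algebra k A]
    (τ : A →ₗ[k] A) (hτ : IsAntiInvolution τ) {r : ℕ} (J' : Fin r → Submodule k A)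
    (hdec : IsCellularDecomposition A τ J') : HasCellDatum A τ := by
  classical
  obtain ⟨hτJ, hindep, hsup, hid, hcell⟩ := hdec
  unfold IsRelCellIdeal at hcell
  choose hle12 hτI₂ Δ hI₁Δ hΔI₂ hΔleft hfin hfree Δτ hΔτeq α hL hR tI tUV tVU htI htUV htVU
    hcomm using hcell
  choose LI LΔ hLI hLΔ hLcomp using hL
  -- basic facts about partial sups
  have hJle : ∀ j : Fin r, J' j ≤ partialSup J' j.succ := by
    intro j
    exact le_iSup_of_le j (le_iSup_of_le (Nat.lt_succ_self _) le_rfl)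
  have hPSsucc : ∀ j : Fin r, partialSup J' j.succ = partialSup J' j.castSucc ⊔ J' j := by
    intro j
    apply le_antisymm
    · apply iSup_le; intro i; apply iSup_le; intro hi
      rcases Nat.lt_succ_iff_lt_or_eq.mp hi with h1 | h1
      · exact le_sup_of_le_left (le_iSup_of_le i (le_iSup_of_le h1 le_rfl))
      · have h2 : i = j := Fin.ext h1
        subst h2
        exact le_sup_right
    · apply sup_le
      · apply iSup_le; intro i; apply iSup_le; intro hi
        exact le_iSup_of_le i (le_iSup_of_le (Nat.lt_succ_of_lt hi) le_rfl)
      · exact hJle j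
  have hdisj : ∀ j : Fin r, Disjoint (J' j) (partialSup J' j.castSucc) := by
    intro j
    have h1 : partialSup J' j.castSucc ≤ ⨆ (i) (_ : i ≠ j), J' i := by
      apply iSup_le; intro i; apply iSup_le; intro hi
      have : i ≠ j := by
        intro hij; subst hij; exact lt_irrefl _ hi
      exact le_iSup_of_le i (le_iSup_of_le this le_rfl)
    exact (iSupIndep_def.mp hindep j).mono_right h1
  have hτPS : ∀ (i : Fin (r + 1)), ∀ x ∈ partialSup J' i, τ x ∈ partialSup J' i := by
    intro i x hx
    have h1 : Submodule.map τ (partialSup J' i) = partialSup J' i := by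
      unfold partialSup
      rw [Submodule.map_iSup]
      apply iSup_congr
      intro j
      rw [Submodule.map_iSup]
      exact iSup_congr fun _ => hτJ j
    rw [← h1]
    exact Submodule.mem_map_of_mem hx
  -- τ exchanges Δ and Δτ
  have hτΔΔτ : ∀ j, ∀ x ∈ Δ j, τ x ∈ Δτ j := by
    intro j x hx
    rw [hΔτeq j]
    exact Submodule.mem_sup_left (Submodule.mem_map_of_mem hx)
  have hτΔτΔ : ∀ j, ∀ x ∈ Δτ j, τ x ∈ Δ j := by
    intro j x hx
    rw [hΔτeq j] at hx
    obtain ⟨y, hy, z, hz, rfl⟩ := Submodule.mem_sup.mp hx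
    obtain ⟨w, hw, rfl⟩ := hy
    have h1 : τ (τ w + z) = w + τ z := by
      rw [map_add, hτ.2]
    rw [h1]
    exact Submodule.add_mem _ hw (hI₁Δ j (hτPS _ _ hz))
  -- the index sets and bases
  haveI instMFree : ∀ j : Fin r, Module.Free k
      (↥(Δ j) ⧸ ((partialSup J' j.castSucc).comap (Δ j).subtype)) := hfree
  haveI instMFin : ∀ j : Fin r, Module.Finite k
      (↥(Δ j) ⧸ ((partialSup J' j.castSucc).comap (Δ j).subtype)) := hfin
  haveI instCBf : ∀ j : Fin r, Fintype (Module.Free.ChooseBasisIndex k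
      (↥(Δ j) ⧸ ((partialSup J' j.castSucc).comap (Δ j).subtype))) :=
    fun j => Module.Free.ChooseBasisIndex.fintype k _
  let M : Fin r → Type := fun j => Fin (Fintype.card (Module.Free.ChooseBasisIndex k
    (↥(Δ j) ⧸ ((partialSup J' j.castSucc).comap (Δ j).subtype))))
  haveI instMFt : ∀ j, Fintype (M j) := fun j => inferInstanceAs (Fintype (Fin _))
  let b : ∀ j : Fin r, Module.Basis (M j) k
      (↥(Δ j) ⧸ ((partialSup J' j.castSucc).comap (Δ j).subtype)) :=
    fun j => (Module.Free.chooseBasis k _).reindex (Fintype.equivFin _)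
  -- e_τ : QΔ ≃ QΔτ
  have heq1 : ∀ j, (tVU j) ∘ₗ (tUV j) = LinearMap.id := by
    intro j
    apply LinearMap.ext
    intro q
    obtain ⟨x, hx, rfl⟩ := mkq_surjective _ _ q
    rw [LinearMap.comp_apply]
    rw [show (tUV j) (mkq _ _ x hx) = mkq _ _ (τ x) (hτΔΔτ j x hx) from htUV j x hx _]
    rw [show (tVU j) (mkq _ _ (τ x) (hτΔΔτ j x hx)) = mkq _ _ (τ (τ x))
      (hτΔτΔ j _ (hτΔΔτ j x hx)) from htVU j (τ x) (hτΔΔτ j x hx) _]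
    rw [LinearMap.id_apply]
    exact mkq_congr _ _ _ _ (hτ.2 x)
  have heq2 : ∀ j, (tUV j) ∘ₗ (tVU j) = LinearMap.id := by
    intro j
    apply LinearMap.ext
    intro q
    obtain ⟨x, hx, rfl⟩ := mkq_surjective _ _ q
    rw [LinearMap.comp_apply]
    rw [show (tVU j) (mkq _ _ x hx) = mkq _ _ (τ x) (hτΔτΔ j x hx) from htVU j x hx _]
    rw [show (tUV j) (mkq _ _ (τ x) (hτΔτΔ j x hx)) = mkq _ _ (τ (τ x))
      (hτΔΔτ j _ (hτΔτΔ j x hx)) from htUV j (τ x) (hτΔτΔ j x hx) _]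
    rw [LinearMap.id_apply]
    exact mkq_congr _ _ _ _ (hτ.2 x)
  let eτ : ∀ j : Fin r, (↥(Δ j) ⧸ ((partialSup J' j.castSucc).comap (Δ j).subtype)) ≃ₗ[k]
      (↥(Δτ j) ⧸ ((partialSup J' j.castSucc).comap (Δτ j).subtype)) :=
    fun j => LinearEquiv.ofLinear (tUV j) (tVU j) (heq2 j) (heq1 j)
  -- φ : J' j ≃ QI j
  let π : ∀ j : Fin r, ↥(J' j) →ₗ[k]
      (↥(partialSup J' j.succ) ⧸ ((partialSup J' j.castSucc).comap (partialSup J' j.succ).subtype)) :=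
    fun j => ((partialSup J' j.castSucc).comap (partialSup J' j.succ).subtype).mkQ ∘ₗ
      Submodule.inclusion (hJle j)
  have hπ : ∀ (j : Fin r) (x : ↥(J' j)),
      π j x = mkq (partialSup J' j.castSucc) (partialSup J' j.succ) ↑x (hJle j x.2) := by
    intro j x
    rfl
  have hπbij : ∀ j : Fin r, Function.Bijective (π j) := by
    intro j
    constructor
    · rw [injective_iff_map_eq_zero]
      intro x hx
      rw [hπ j x, mkq_eq_zero_iff] at hx
      have h0 : (x : A) = 0 := Submodule.disjoint_def.mp (hdisj j) _ x.2 hx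
      exact Subtype.ext h0
    · intro q
      obtain ⟨x, hx, rfl⟩ := mkq_surjective _ _ q
      have hx' := hx
      rw [hPSsucc j] at hx'
      obtain ⟨y, hy, z, hz, rfl⟩ := Submodule.mem_sup.mp hx'
      refine ⟨⟨z, hz⟩, ?_⟩
      rw [hπ j]
      rw [mkq_eq_iff]
      have : z - (y + z) = -y := by abel
      rw [this]
      exact Submodule.neg_mem _ hy
  let φ : ∀ j : Fin r, ↥(J' j) ≃ₗ[k]
      (↥(partialSup J' j.succ) ⧸ ((partialSup J' j.castSucc).comap (partialSup J' j.succ).subtype)) :=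
    fun j => LinearEquiv.ofBijective (π j) (hπbij j)
  -- bases of QI and of J' j
  let B : ∀ j : Fin r, Module.Basis (M j × M j) k
      (↥(partialSup J' j.succ) ⧸ ((partialSup J' j.castSucc).comap (partialSup J' j.succ).subtype)) :=
    fun j => ((b j).tensorProduct ((b j).map (eτ j))).map (α j).symm
  let B' : ∀ j : Fin r, Module.Basis (M j × M j) k ↥(J' j) := fun j => (B j).map (φ j).symm
  have hInt : DirectSum.IsInternal J' :=
    (DirectSum.isInternal_submodule_iff_iSupIndep_and_iSup_eq_top J').mpr ⟨hindep, hsup⟩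
  let Cb : Module.Basis ((j : Fin r) × (M j × M j)) k A := hInt.collectedBasis B'
  have hCb : ∀ (j : Fin r) (p : M j × M j), Cb ⟨j, p⟩ = ↑(B' j p) := by
    intro j p
    exact congrFun (hInt.collectedBasis_coe B') ⟨j, p⟩
  have hBmem : ∀ (j : Fin r) (p : M j × M j), (↑(B' j p) : A) ∈ J' j := fun j p => (B' j p).2
  have hφB : ∀ (j : Fin r) (p : M j × M j), φ j (B' j p) = B j p := by
    intro j p
    show φ j ((φ j).symm (B j p)) = B j p
    exact (φ j).apply_symm_apply _
  have hmkB : ∀ (j : Fin r) (p : M j × M j),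
      mkq (partialSup J' j.castSucc) (partialSup J' j.succ) ↑(B' j p)
        (hJle j (hBmem j p)) = B j p := by
    intro j p
    rw [← hπ j (B' j p)]
    exact hφB j p
  have hαB : ∀ (j : Fin r) (p : M j × M j),
      α j (B j p) = (b j) p.1 ⊗ₜ[k] (eτ j ((b j) p.2)) := by
    intro j p
    show α j ((α j).symm (((b j).tensorProduct ((b j).map (eτ j))) p)) = _
    rw [(α j).apply_symm_apply]
    obtain ⟨p1, p2⟩ := p
    rw [Module.Basis.tensorProduct_apply, Module.Basis.map_apply]
  -- tVU ∘ eτ = id as functions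
  have htVUeτ : ∀ (j : Fin r) x, tVU j (eτ j x) = x := fun j x => (eτ j).symm_apply_apply x
  refine ⟨Fin r, inferInstance, fun a b => b < a,
    { toIrrefl := ⟨fun a h => lt_irrefl _ h⟩,
      toIsTrans := ⟨fun a b c h1 h2 => lt_trans h2 h1⟩ },
    M, instMFt, Cb, ?_, ?_⟩
  · -- (C2)
    intro l S T
    have hτmem : τ ↑(B' l (S, T)) ∈ J' l := by
      have h0 : τ ↑(B' l (S, T)) ∈ Submodule.map τ (J' l) :=
        Submodule.mem_map_of_mem (hBmem l (S, T))
      rwa [hτJ l] at h0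
    have hinj := (hπbij l).1
    have hkey : π l ⟨τ ↑(B' l (S, T)), hτmem⟩ = π l (B' l (T, S)) := by
      rw [hπ l, hπ l]
      have h1 : mkq (partialSup J' l.castSucc) (partialSup J' l.succ) (τ ↑(B' l (S, T)))
          (hJle l hτmem) = tI l (B l (S, T)) := by
        rw [← hmkB l (S, T)]
        exact (htI l ↑(B' l (S, T)) (hJle l (hBmem l (S, T))) (hJle l hτmem)).symm
      rw [h1, hmkB l (T, S)]
      apply (α l).injective
      have h2 := LinearMap.congr_fun (hcomm l) (B l (S, T))
      simp only [LinearMap.coe_comp, Function.comp_apply, LinearEquiv.coe_coe] at h2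
      rw [h2, hαB l (S, T), hαB l (T, S), TensorProduct.comm_tmul, TensorProduct.map_tmul,
        htVUeτ l]
      rfl
    have h3 : τ ↑(B' l (S, T)) = (↑(B' l (T, S)) : A) := congrArg Subtype.val (hinj hkey)
    exact (congrArg τ (hCb l (S, T))).trans (h3.trans (hCb l (T, S)).symm)
  · -- (C3)
    refine ⟨fun a l X S => (b l).repr (LΔ l a ((b l) S)) X, ?_⟩
    intro a l S T
    have hDmem : (↑(B' l (S, T)) : A) ∈ partialSup J' l.succ := hJle l (hBmem l (S, T))
    have haD : a * ↑(B' l (S, T)) ∈ partialSup J' l.succ := (hid l.succ a _ hDmem).1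
    -- identify the span with the lower partial sup
    have hJspan : ∀ l' : Fin r,
        Submodule.span k (Set.range (fun p : M l' × M l' => (↑(B' l' p) : A))) = J' l' := by
      intro l'
      have h1 : Set.range (fun p : M l' × M l' => (↑(B' l' p) : A)) =
          (J' l').subtype '' Set.range (B' l') := by
        ext x
        constructor
        · rintro ⟨p, rfl⟩; exact ⟨B' l' p, ⟨p, rfl⟩, rfl⟩
        · rintro ⟨y, ⟨p, rfl⟩, rfl⟩; exact ⟨p, rfl⟩
      rw [h1, ← Submodule.map_span, Module.Basis.span_eq, Submodule.map_subtype_top]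
    have hspan : Submodule.span k
        {x | ∃ (l' : Fin r) (_ : l' < l) (X : M l') (Y : M l'), x = Cb ⟨l', (X, Y)⟩} =
        partialSup J' l.castSucc := by
      apply le_antisymm
      · apply Submodule.span_le.mpr
        rintro x ⟨l', hl', X, Y, rfl⟩
        rw [hCb l' (X, Y)]
        exact Submodule.mem_iSup_of_mem l' (Submodule.mem_iSup_of_mem hl' (hBmem l' (X, Y)))
      · apply iSup_le; intro l'; apply iSup_le; intro hl'
        rw [← hJspan l']
        apply Submodule.span_le.mpr
        rintro x ⟨p, rfl⟩
        apply Submodule.subset_span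
        exact ⟨l', hl', p.1, p.2, by rw [hCb l' (p.1, p.2)]⟩
    -- the quotient computation
    have hsm : ∀ X : M l, ((b l).repr (LΔ l a ((b l) S)) X) • (↑(B' l (X, T)) : A) ∈
        partialSup J' l.succ := fun X => Submodule.smul_mem _ _ (hJle l (hBmem l (X, T)))
    have hsum_mem : ∑ X : M l, ((b l).repr (LΔ l a ((b l) S)) X) • (↑(B' l (X, T)) : A) ∈
        partialSup J' l.succ := Submodule.sum_mem _ fun X _ => hsm X
    have hmkeq : mkq (partialSup J' l.castSucc) (partialSup J' l.succ) (a * ↑(B' l (S, T))) haD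
        = mkq (partialSup J' l.castSucc) (partialSup J' l.succ)
          (∑ X : M l, ((b l).repr (LΔ l a ((b l) S)) X) • (↑(B' l (X, T)) : A)) hsum_mem := by
      have e1 : mkq (partialSup J' l.castSucc) (partialSup J' l.succ) (a * ↑(B' l (S, T))) haD
          = LI l a (B l (S, T)) := by
        rw [← hmkB l (S, T)]
        exact (hLI l a ↑(B' l (S, T)) hDmem haD).symm
      have e2 : mkq (partialSup J' l.castSucc) (partialSup J' l.succ)
          (∑ X : M l, ((b l).repr (LΔ l a ((b l) S)) X) • (↑(B' l (X, T)) : A)) hsum_mem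
          = ∑ X : M l, ((b l).repr (LΔ l a ((b l) S)) X) • B l (X, T) := by
        rw [mkq_finsum _ _ _ hsm]
        refine Finset.sum_congr rfl fun X _ => ?_
        rw [mkq_smul _ _ _ (hJle l (hBmem l (X, T)))]
        rw [hmkB l (X, T)]
      rw [e1, e2]
      apply (α l).injective
      have h2 := LinearMap.congr_fun (hLcomp l a) (B l (S, T))
      simp only [LinearMap.coe_comp, Function.comp_apply, LinearEquiv.coe_coe] at h2
      rw [h2, hαB l (S, T), TensorProduct.map_tmul, LinearMap.id_apply, map_sum]
      have e3 : ∀ X : M l, (α l) (((b l).repr ((LΔ l a) ((b l) S)) X) • B l (X, T))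
          = ((b l).repr ((LΔ l a) ((b l) S)) X) • ((b l) X ⊗ₜ[k] (eτ l) ((b l) T)) := by
        intro X
        rw [map_smul, hαB l (X, T)]
      rw [Finset.sum_congr rfl (fun X _ => e3 X)]
      conv_lhs => rw [← (b l).sum_repr ((LΔ l a) ((b l) S))]
      rw [TensorProduct.sum_tmul]
      exact Finset.sum_congr rfl fun X _ => TensorProduct.smul_tmul' _ _ _
    rw [show (Cb ⟨l, (S, T)⟩ : A) = ↑(B' l (S, T)) from hCb l (S, T)]
    have hfin : a * ↑(B' l (S, T)) -
        ∑ X : M l, ((b l).repr (LΔ l a ((b l) S)) X) • (↑(B' l (X, T)) : A) ∈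
        partialSup J' l.castSucc := (mkq_eq_iff _ _ haD hsum_mem).mp hmkeq
    rw [hspan]
    have hsc : ∀ X : M l, (Cb ⟨l, (X, T)⟩ : A) = ↑(B' l (X, T)) := fun X => hCb l (X, T)
    simp only [hsc]
    exact hfin

/-- König–Xi characterization: over a noetherian integral domain, a
finitely generated free `k`-algebra `A` with anti-involution `τ` admits a Graham–Lehrer
cell datum if and only if it admits a König–Xi cellular decomposition. -/
theorem hasCellDatum_iff_cellularDecomposition
    {k : Type*} [CommRing k] [IsDomain k] [IsNoetherianRing k]
    (A : Type*) [Ring A] [Algebra k A] [Module.Finite k A] [Module.Free k A]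
    (τ : A →ₗ[k] A) (hτ : IsAntiInvolution τ) :
    HasCellDatum A τ ↔
      ∃ (r : ℕ) (J' : Fin r → Submodule k A), IsCellularDecomposition A τ J' := by
  constructor
  · intro h
    exact forward_direction A τ hτ h
  · rintro ⟨r, J', hdec⟩
    exact reverse_direction A τ hτ J' hdec
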